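/- For each integer n let x = (n+1) mod (2+√2); then, as n ranges over the integers with x in the interval (1, 1+(1+√2)/2), the systole length √((x - (1 + √2/2))² + 1/2) takes infinitely many distinct values. -/

import Mathlib

open Real Set

noncomputable def TT : ℝ := 2 + Real.sqrt 2

noncomputable def ff (x : ℝ) : ℝ := x - TT * ⌊x / TT⌋

lemma s2a : (1.41:ℝ) < Real.sqrt 2 := by
  nlinarith [Real.sq_sqrt (show (0:ℝ) ≤ 2 by norm_num), Real.sqrt_nonneg 2]

lemma s2b : Real.sqrt 2 < 1.42 := by
  nlinarith [Real.sq_sqrt (show (0:ℝ) ≤ 2 by norm_num), Real.sqrt_nonneg 2]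

lemma TT_pos : 0 < TT := by unfold TT; linarith [s2a]

lemma ff_eq (y : ℝ) (j : ℤ) (h0 : 0 ≤ y) (h1 : y < TT) : ff (y + TT * j) = y := by
  have hT : 0 < TT := TT_pos
  have hdiv : (y + TT * j) / TT = y / TT + j := by field_simp
  have hfl : ⌊(y + TT * j) / TT⌋ = j := by
    rw [hdiv, Int.floor_add_intCast, Int.floor_eq_zero_iff.mpr, zero_add]
    exact ⟨div_nonneg h0 hT.le, (div_lt_one hT).mpr h1⟩
  simp only [ff, hfl]; ring

lemma ff_nonneg (x : ℝ) : 0 ≤ ff x := by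
  have hT : 0 < TT := TT_pos
  have h := Int.floor_le (x / TT)
  have key : TT * (x / TT) = x := by field_simp
  have : TT * (⌊x / TT⌋ : ℝ) ≤ TT * (x / TT) := by
    exact mul_le_mul_of_nonneg_left h hT.le
  unfold ff; linarith [key ▸ this]

lemma ff_lt (x : ℝ) : ff x < TT := by
  have hT : 0 < TT := TT_pos
  have h := Int.lt_floor_add_one (x / TT)
  have key : TT * (x / TT) = x := by field_simp
  have : TT * (x / TT) < TT * ((⌊x / TT⌋ : ℝ) + 1) := by
    exact mul_lt_mul_of_pos_left h hT
  unfold ff; nlinarith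

lemma irr_TT : Irrational TT := by
  have h : Irrational ((2:ℚ) + Real.sqrt 2) := irrational_sqrt_two.ratCast_add 2
  unfold TT; simpa using h

lemma P_inj : Function.Injective (fun n : ℤ => ff ((n:ℝ) + 1)) := by
  intro n m h
  simp only [ff] at h
  set a := ⌊((n:ℝ)+1)/TT⌋ with ha
  set b := ⌊((m:ℝ)+1)/TT⌋ with hb
  have hd : (n:ℝ) - m = TT * ((a:ℝ) - b) := by
    have : ((n:ℝ)+1) - TT * a = ((m:ℝ)+1) - TT * b := h
    ring_nf at this ⊢
    linarith
  by_cases hab : a = b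
  · have : (n:ℝ) = m := by rw [hab] at hd; simp at hd; linarith
    exact_mod_cast this
  · exfalso
    apply irr_TT
    refine ⟨((n - m : ℤ) : ℚ) / ((a - b : ℤ) : ℚ), ?_⟩
    have habR : ((a:ℝ) - b) ≠ 0 := by
      intro hz
      apply hab
      have : (a:ℝ) = b := by linarith
      exact_mod_cast this
    push_cast
    rw [div_eq_iff habR]
    linarith [hd]

lemma exists_ge (N : ℤ) : ∃ n : ℤ, N ≤ n ∧
    ff ((n:ℝ) + 1) ∈ Set.Ioo (1:ℝ) (1 + (1 + Real.sqrt 2) / 2) := by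
  have hs2a := s2a
  have hs2b := s2b
  have hTa : (3.41:ℝ) < TT := by unfold TT; linarith
  have hTb : TT < 3.42 := by unfold TT; linarith
  have hu : (2.205:ℝ) < 1 + (1 + Real.sqrt 2) / 2 := by linarith
  set j := ⌊((N:ℝ)+1)/TT⌋ with hj
  set r := ff ((N:ℝ)+1) with hr
  have hx : ((N:ℝ)+1) = r + TT * j := by simp only [hr, ff, hj]; ring
  have h0 : 0 ≤ r := ff_nonneg _
  have h1 : r < TT := ff_lt _
  rcases le_or_gt r (1/5) with h | h
  · refine ⟨N+2, by omega, ?_⟩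
    have e : ((N+2:ℤ):ℝ) + 1 = (r + 2) + TT * j := by push_cast; linarith
    rw [e, ff_eq (r+2) j (by linarith) (by linarith)]
    exact ⟨by linarith, by linarith⟩
  rcases le_or_gt r (6/5) with h2 | h2
  · refine ⟨N+1, by omega, ?_⟩
    have e : ((N+1:ℤ):ℝ) + 1 = (r + 1) + TT * j := by push_cast; linarith
    rw [e, ff_eq (r+1) j (by linarith) (by linarith)]
    exact ⟨by linarith, by linarith⟩
  rcases le_or_gt r (11/5) with h3 | h3
  · exact ⟨N, le_refl _, by rw [← hr]; exact ⟨by linarith, by linarith⟩⟩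
  rcases le_or_gt r (TT - 1) with h4 | h4
  · refine ⟨N+3, by omega, ?_⟩
    have e : ((N+3:ℤ):ℝ) + 1 = (r + 3 - TT) + TT * ((j + 1 : ℤ) : ℝ) := by push_cast; linarith
    rw [e, ff_eq (r + 3 - TT) (j+1) (by linarith) (by linarith)]
    exact ⟨by linarith, by linarith⟩
  · refine ⟨N+2, by omega, ?_⟩
    have e : ((N+2:ℤ):ℝ) + 1 = (r + 2 - TT) + TT * ((j + 1 : ℤ) : ℝ) := by push_cast; linarith
    rw [e, ff_eq (r + 2 - TT) (j+1) (by linarith) (by linarith)]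
    exact ⟨by linarith, by linarith⟩

theorem systole_lengths_infinite :
    Set.Infinite {L : ℝ | ∃ n : ℤ,
      (((n : ℝ) + 1) - (2 + Real.sqrt 2) * ⌊((n : ℝ) + 1) / (2 + Real.sqrt 2)⌋) ∈
        Set.Ioo (1 : ℝ) (1 + (1 + Real.sqrt 2) / 2) ∧
      L = Real.sqrt (((((n : ℝ) + 1) - (2 + Real.sqrt 2) * ⌊((n : ℝ) + 1) / (2 + Real.sqrt 2)⌋)
            - (1 + Real.sqrt 2 / 2)) ^ 2 + 1 / 2)} := by
  classical
  set c : ℝ := 1 + Real.sqrt 2 / 2 with hc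
  set S : Set ℤ := {n : ℤ | ff ((n:ℝ) + 1) ∈ Set.Ioo (1:ℝ) (1 + (1 + Real.sqrt 2) / 2)} with hS
  set ℓ : ℤ → ℝ := fun n => Real.sqrt ((ff ((n:ℝ) + 1) - c) ^ 2 + 1 / 2) with hℓ
  have hset : {L : ℝ | ∃ n : ℤ,
      (((n : ℝ) + 1) - (2 + Real.sqrt 2) * ⌊((n : ℝ) + 1) / (2 + Real.sqrt 2)⌋) ∈
        Set.Ioo (1 : ℝ) (1 + (1 + Real.sqrt 2) / 2) ∧
      L = Real.sqrt (((((n : ℝ) + 1) - (2 + Real.sqrt 2) * ⌊((n : ℝ) + 1) / (2 + Real.sqrt 2)⌋)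
            - (1 + Real.sqrt 2 / 2)) ^ 2 + 1 / 2)} = ℓ '' S := by
    ext L
    simp only [Set.mem_setOf_eq, Set.mem_image, hℓ, hS, ff, TT, hc]
    constructor
    · rintro ⟨n, hn1, hn2⟩; exact ⟨n, hn1, hn2.symm⟩
    · rintro ⟨n, hn1, hn2⟩; exact ⟨n, hn1, hn2.symm⟩
  rw [hset]
  have hSinf : S.Infinite := by
    apply Set.infinite_of_not_bddAbove
    rintro ⟨b, hb⟩
    obtain ⟨n, hn1, hn2⟩ := exists_ge (b + 1)
    have : n ≤ b := hb hn2
    omega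
  intro hfin
  set φ : ℤ → ℝ × Prop := fun n => (ℓ n, c ≤ ff ((n:ℝ) + 1)) with hφ
  have hinj : Set.InjOn φ S := by
    intro n hn m hm hnm
    have h1 : ℓ n = ℓ m := congrArg Prod.fst hnm
    have h2 : (c ≤ ff ((n:ℝ) + 1)) ↔ (c ≤ ff ((m:ℝ) + 1)) := by
      have := congrArg Prod.snd hnm
      simp only [hφ] at this
      exact iff_of_eq this
    have hsq : (ff ((n:ℝ) + 1) - c) ^ 2 = (ff ((m:ℝ) + 1) - c) ^ 2 := by
      have hn2 := Real.sq_sqrt (show (0:ℝ) ≤ (ff ((n:ℝ)+1) - c)^2 + 1/2 by positivity)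
      have hm2 := Real.sq_sqrt (show (0:ℝ) ≤ (ff ((m:ℝ)+1) - c)^2 + 1/2 by positivity)
      have h1' : Real.sqrt ((ff ((n:ℝ)+1) - c)^2 + 1/2)
          = Real.sqrt ((ff ((m:ℝ)+1) - c)^2 + 1/2) := h1
      have e1 : ((ff ((n:ℝ)+1) - c)^2 + 1/2) = ((ff ((m:ℝ)+1) - c)^2 + 1/2) := by
        rw [← hn2, ← hm2]; exact congrArg (· ^ 2) h1'
      linear_combination e1
    have habs : |ff ((n:ℝ) + 1) - c| = |ff ((m:ℝ) + 1) - c| := by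
      rw [← Real.sqrt_sq_eq_abs, ← Real.sqrt_sq_eq_abs, hsq]
    have hPeq : ff ((n:ℝ) + 1) = ff ((m:ℝ) + 1) := by
      by_cases hcn : c ≤ ff ((n:ℝ) + 1)
      · have hcm : c ≤ ff ((m:ℝ) + 1) := h2.mp hcn
        rw [abs_of_nonneg (by linarith), abs_of_nonneg (by linarith)] at habs
        linarith
      · have hcm : ¬ c ≤ ff ((m:ℝ) + 1) := fun hh => hcn (h2.mpr hh)
        push_neg at hcn hcm
        rw [abs_of_neg (by linarith), abs_of_neg (by linarith)] at habs
        linarith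
    exact P_inj hPeq
  have hfin2 : (φ '' S).Finite := by
    apply Set.Finite.subset (hfin.prod (Set.finite_univ : (Set.univ : Set Prop).Finite))
    rintro x ⟨n, hn, rfl⟩
    exact ⟨⟨n, hn, rfl⟩, Set.mem_univ _⟩
  exact hSinf (Set.Finite.of_finite_image hfin2 hinj)
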